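/- arXiv:1904.04467 — 4 statements merged into one kernel-verified Lean document; each statement's English description precedes it below -/
import Mathlib

section
/- Let Q1 be a selection-join (SJ) query with projections p r and selection θ, let Q2 be a monotone query, let D be an instance, and let t be a tuple with t ∈ Q1(D) \ Q2(D). Define the canonical subinstance D_t by D_t r = {p r t} for every r : Fin k. Then: (i) D_t ⊆ D; (ii) t ∈ Q1(D_t) \ Q2(D_t); and (iii) every subinstance D' ⊆ D with t ∈ Q1(D') satisfies D_t ⊆ D'. Hence D_t, which has size k, is a smallest witness for t with respect to Q1 − Q2 and D, and every witness contains it. -/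
/-- For an SJ query `Q1` (given by projections `p` and
selection `θ`), a monotone query `Q2`, a finite instance `D`, and a tuple
`t ∈ Q1 D \ Q2 D`, the canonical subinstance `Dt r = {p r t}` satisfies:
(i) `Dt ⊆ D`; (ii) `t ∈ Q1 Dt \ Q2 Dt`; (iii) every subinstance `D' ⊆ D`
with `t ∈ Q1 D'` contains `Dt`.  Hence `Dt` has size `k` and is a smallest
witness for `t` w.r.t. `Q1 - Q2` and `D`. -/
theorem stmt_1 {k : ℕ} {α : Fin k → Type*} {β : Type*}
    (p : (r : Fin k) → β → α r) (θ : β → Prop)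
    (Q1 Q2 : ((r : Fin k) → Set (α r)) → Set β)
    (hQ1 : ∀ A : (r : Fin k) → Set (α r), Q1 A = {x : β | θ x ∧ ∀ r, p r x ∈ A r})
    (hQ2 : ∀ A B : (r : Fin k) → Set (α r), (∀ r, A r ⊆ B r) → Q2 A ⊆ Q2 B)
    (D : (r : Fin k) → Set (α r)) (hD : ∀ r, (D r).Finite)
    (t : β) (ht : t ∈ Q1 D \ Q2 D)
    (Dt : (r : Fin k) → Set (α r)) (hDt : ∀ r, Dt r = {p r t}) :
    (∀ r, Dt r ⊆ D r) ∧
    (t ∈ Q1 Dt \ Q2 Dt) ∧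
    (∀ D' : (r : Fin k) → Set (α r), (∀ r, D' r ⊆ D r) → t ∈ Q1 D' →
      ∀ r, Dt r ⊆ D' r) ∧
    (∑ r, (Dt r).ncard) = k ∧
    (∀ D' : (r : Fin k) → Set (α r), (∀ r, D' r ⊆ D r) → t ∈ Q1 D' \ Q2 D' →
      ∑ r, (Dt r).ncard ≤ ∑ r, (D' r).ncard) := by

  obtain ⟨ht1, ht2⟩ := ht
  rw [hQ1] at ht1
  obtain ⟨hθ, hp⟩ := ht1
  have hsub : ∀ r, Dt r ⊆ D r := by
    intro r x hx
    rw [hDt] at hx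
    rcases hx with rfl
    exact hp r
  have hmem : t ∈ Q1 Dt \ Q2 Dt := by
    constructor
    · rw [hQ1]
      exact ⟨hθ, fun r => by rw [hDt]; rfl⟩
    · intro h
      exact ht2 (hQ2 Dt D hsub h)
  have hmin : ∀ D' : (r : Fin k) → Set (α r), (∀ r, D' r ⊆ D r) → t ∈ Q1 D' →
      ∀ r, Dt r ⊆ D' r := by
    intro D' _ htD' r x hx
    rw [hDt] at hx
    rcases hx with rfl
    rw [hQ1] at htD'
    exact htD'.2 r
  have hcard : (∑ r, (Dt r).ncard) = k := by
    have : ∀ r, (Dt r).ncard = 1 := fun r => by rw [hDt]; simp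
    simp [this]
  refine ⟨hsub, hmem, hmin, hcard, ?_⟩
  intro D' hD' htD'
  rw [hcard]
  have h1 : ∀ r, 1 ≤ (D' r).ncard := by
    intro r
    have hfin : (D' r).Finite := (hD r).subset (hD' r)
    have hne : (D' r).Nonempty := ⟨p r t, hmin D' hD' htD'.1 r (by rw [hDt]; rfl)⟩
    exact (Set.ncard_pos hfin).mpr hne
  calc k = ∑ _r : Fin k, 1 := by simp
    _ ≤ ∑ r, (D' r).ncard := Finset.sum_le_sum fun r _ => h1 r
end

section
/- Let Q1 be a JU* query (a finite union of join queries Q_j, j ∈ J), let Q2 be a monotone query, let D be a finite instance, and let t be a tuple with t ∈ Q1(D) \ Q2(D). Then the minimum size of a witness for t with respect to Q1 − Q2 and D equals the minimum, over all j ∈ J with t ∈ Q_j(D), of the size of the canonical witness W_{t,j}. In particular, for any j attaining this minimum, W_{t,j} ⊆ D and t ∈ Q1(W_{t,j}) \ Q2(W_{t,j}). -/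
/-- For a JU* query `Q1 = ⋃ j Qj j` (a finite union of join
queries), a monotone query `Q2`, a finite instance `D`, and a tuple
`t ∈ Q1 D \ Q2 D`, the minimum size of a witness for `t` w.r.t. `Q1 - Q2`
and `D` equals the minimum, over `j` with `t ∈ Qj j D`, of the size of the
canonical witness `W j`.  In particular, for any `j` attaining this minimum,
`W j ⊆ D` and `t ∈ Q1 (W j) \ Q2 (W j)`. -/
theorem stmt_3 {k : ℕ} {α : Fin k → Type*} {β : Type*} {J : Type*} [Fintype J]
    (kj : J → ℕ) (ρ : (j : J) → Fin (kj j) → Fin k)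
    (p : (j : J) → (i : Fin (kj j)) → β → α (ρ j i)) (θ : J → β → Prop)
    (Qj : J → ((r : Fin k) → Set (α r)) → Set β)
    (hQj : ∀ (j : J) (A : (r : Fin k) → Set (α r)),
      Qj j A = {x : β | θ j x ∧ ∀ i, p j i x ∈ A (ρ j i)})
    (Q1 : ((r : Fin k) → Set (α r)) → Set β)
    (hQ1 : ∀ A : (r : Fin k) → Set (α r), Q1 A = ⋃ j : J, Qj j A)
    (Q2 : ((r : Fin k) → Set (α r)) → Set β)
    (hQ2 : ∀ A B : (r : Fin k) → Set (α r), (∀ r, A r ⊆ B r) → Q2 A ⊆ Q2 B)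
    (D : (r : Fin k) → Set (α r)) (hD : ∀ r, (D r).Finite)
    (t : β) (ht : t ∈ Q1 D \ Q2 D)
    (W : J → (r : Fin k) → Set (α r))
    (hW : ∀ (j : J) (r : Fin k),
      W j r = {a : α r | ∃ (i : Fin (kj j)) (h : ρ j i = r), h ▸ p j i t = a}) :
    sInf {n : ℕ | ∃ D' : (r : Fin k) → Set (α r), (∀ r, D' r ⊆ D r) ∧
        t ∈ Q1 D' \ Q2 D' ∧ n = ∑ r, (D' r).ncard} =
      sInf {n : ℕ | ∃ j : J, t ∈ Qj j D ∧ n = ∑ r, (W j r).ncard} ∧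
    ∀ j : J, t ∈ Qj j D →
      (∑ r, (W j r).ncard) =
        sInf {n : ℕ | ∃ j' : J, t ∈ Qj j' D ∧ n = ∑ r, (W j' r).ncard} →
      (∀ r, W j r ⊆ D r) ∧ t ∈ Q1 (W j) \ Q2 (W j) := by
  obtain ⟨ht1, ht2⟩ := ht
  -- W j is contained in any instance satisfying Qj j
  have hWsub : ∀ (j : J) (A : (r : Fin k) → Set (α r)), t ∈ Qj j A →
      ∀ r, W j r ⊆ A r := by
    intro j A hA r a ha
    rw [hW] at ha
    obtain ⟨i, h, rfl⟩ := ha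
    rw [hQj] at hA
    subst h
    exact hA.2 i
  have hWmem : ∀ j : J, θ j t → t ∈ Qj j (W j) := by
    intro j hθ
    rw [hQj]
    exact ⟨hθ, fun i => by rw [hW]; exact ⟨i, rfl, rfl⟩⟩
  have hcan : ∀ j : J, t ∈ Qj j D →
      (∀ r, W j r ⊆ D r) ∧ t ∈ Q1 (W j) \ Q2 (W j) := by
    intro j hj
    have hsub := hWsub j D hj
    have hθ : θ j t := by rw [hQj] at hj; exact hj.1
    refine ⟨hsub, ?_, fun h => ht2 (hQ2 _ _ hsub h)⟩
    rw [hQ1]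
    exact Set.mem_iUnion.2 ⟨j, hWmem j hθ⟩
  set S1 := {n : ℕ | ∃ D' : (r : Fin k) → Set (α r), (∀ r, D' r ⊆ D r) ∧
      t ∈ Q1 D' \ Q2 D' ∧ n = ∑ r, (D' r).ncard} with hS1def
  set S2 := {n : ℕ | ∃ j : J, t ∈ Qj j D ∧ n = ∑ r, (W j r).ncard} with hS2def
  have hS2ne : S2.Nonempty := by
    rw [hQ1] at ht1
    obtain ⟨j, hj⟩ := Set.mem_iUnion.1 ht1
    exact ⟨_, j, hj, rfl⟩
  have hS2S1 : S2 ⊆ S1 := by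
    rintro n ⟨j, hj, rfl⟩
    obtain ⟨hsub, hmem⟩ := hcan j hj
    exact ⟨W j, hsub, hmem, rfl⟩
  have hdom : ∀ n ∈ S1, ∃ m ∈ S2, m ≤ n := by
    rintro n ⟨D', hsub, ⟨hm1, _⟩, rfl⟩
    rw [hQ1] at hm1
    obtain ⟨j, hj⟩ := Set.mem_iUnion.1 hm1
    have hjD : t ∈ Qj j D := by
      rw [hQj] at hj ⊢
      exact ⟨hj.1, fun i => hsub _ (hj.2 i)⟩
    refine ⟨_, ⟨j, hjD, rfl⟩, Finset.sum_le_sum fun r _ => ?_⟩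
    exact Set.ncard_le_ncard (hWsub j D' hj r) ((hD r).subset (hsub r))
  constructor
  · apply le_antisymm
    · exact Nat.sInf_le (hS2S1 (Nat.sInf_mem hS2ne))
    · obtain ⟨m, hm, hle⟩ := hdom _ (Nat.sInf_mem (hS2ne.mono hS2S1))
      exact le_trans (Nat.sInf_le hm) hle
  · intro j hj _
    exact hcan j hj
end

section
/- Let (q_i)_{i ∈ I} be a finite family of monotone queries mapping instances to subsets of β, let t be a tuple, and let Q be a query whose membership of t is determined by the q_i-membership vector, i.e., for all instances D₁, D₂, if (t ∈ q_i(D₁) ↔ t ∈ q_i(D₂)) holds for every i ∈ I, then t ∈ Q(D₁) ↔ t ∈ Q(D₂). Then for every finite instance D' with t ∈ Q(D'), there exist minimal subinstances w_i ⊆ D' with t ∈ q_i(w_i), one for each i with t ∈ q_i(D'), such that their pointwise union W satisfies W ⊆ D' and t ∈ Q(W). Consequently, for a finite instance D with t ∈ Q(D), some smallest subinstance D* ⊆ D with t ∈ Q(D*) is a pointwise union of minimal subinstances witnessing t for some of the queries q_i. -/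
open Classical in
lemma exists_minimal_witness {k : ℕ} {α : Fin k → Type*} {β : Type*}
    (f : ((r : Fin k) → Set (α r)) → Set β) (t : β) :
    ∀ n (D : (r : Fin k) → Set (α r)), (∀ r, (D r).Finite) →
      ∑ r, (D r).ncard ≤ n → t ∈ f D →
      ∃ w : (r : Fin k) → Set (α r), (∀ r, w r ⊆ D r) ∧ t ∈ f w ∧
        ∀ w', (∀ r, w' r ⊆ w r) → t ∈ f w' → w' = w := by
  intro n
  induction n using Nat.strong_induction_on with
  | _ n ih =>
    intro D hfin hle ht
    by_cases hmin : ∀ w', (∀ r, w' r ⊆ D r) → t ∈ f w' → w' = D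
    · exact ⟨D, fun r => subset_rfl, ht, hmin⟩
    · push_neg at hmin
      obtain ⟨w', hsub, ht', hne⟩ := hmin
      have hfin' : ∀ r, (w' r).Finite := fun r => (hfin r).subset (hsub r)
      obtain ⟨r0, hr0⟩ : ∃ r, w' r ≠ D r := by
        by_contra h; push_neg at h; exact hne (funext h)
      have hlt : ∑ r, (w' r).ncard < ∑ r, (D r).ncard := by
        refine Finset.sum_lt_sum (fun r _ => Set.ncard_le_ncard (hsub r) (hfin r))
          ⟨r0, Finset.mem_univ r0, Set.ncard_lt_ncard
            ⟨hsub r0, fun h => hr0 (subset_antisymm (hsub r0) h)⟩ (hfin r0)⟩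
      obtain ⟨w, h1, h2, h3⟩ := ih (∑ r, (w' r).ncard) (lt_of_lt_of_le hlt hle) w' hfin' le_rfl ht'
      exact ⟨w, fun r => (h1 r).trans (hsub r), h2, h3⟩

theorem stmt6_part1 {k : ℕ} {α : Fin k → Type*} {β : Type*} {I : Type*}
    (q : I → ((r : Fin k) → Set (α r)) → Set β)
    (hq : ∀ (i : I) (A B : (r : Fin k) → Set (α r)),
      (∀ r, A r ⊆ B r) → q i A ⊆ q i B)
    (t : β)
    (Q : ((r : Fin k) → Set (α r)) → Set β)
    (hQ : ∀ D₁ D₂ : (r : Fin k) → Set (α r),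
      (∀ i : I, (t ∈ q i D₁ ↔ t ∈ q i D₂)) → (t ∈ Q D₁ ↔ t ∈ Q D₂)) :
    ∀ D' : (r : Fin k) → Set (α r), (∀ r, (D' r).Finite) → t ∈ Q D' →
      ∃ w : I → (r : Fin k) → Set (α r),
        (∀ i : I, t ∈ q i D' →
          (∀ r, w i r ⊆ D' r) ∧ t ∈ q i (w i) ∧
          (∀ w' : (r : Fin k) → Set (α r), (∀ r, w' r ⊆ w i r) →
            t ∈ q i w' → w' = w i)) ∧
        (∀ r, (⋃ i ∈ {i : I | t ∈ q i D'}, w i r) ⊆ D' r) ∧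
        t ∈ Q (fun r => ⋃ i ∈ {i : I | t ∈ q i D'}, w i r) := by
  classical
  intro D' hfin ht
  have hch : ∀ i : I, t ∈ q i D' →
      ∃ w : (r : Fin k) → Set (α r), (∀ r, w r ⊆ D' r) ∧ t ∈ q i w ∧
        ∀ w', (∀ r, w' r ⊆ w r) → t ∈ q i w' → w' = w :=
    fun i hi => exists_minimal_witness (q i) t (∑ r, (D' r).ncard) D' hfin le_rfl hi
  choose! w hw1 hw2 hw3 using hch
  set W : (r : Fin k) → Set (α r) := fun r => ⋃ i ∈ {i : I | t ∈ q i D'}, w i r with hW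
  have hWsub : ∀ r, W r ⊆ D' r := by
    intro r
    exact Set.iUnion₂_subset fun i hi => hw1 i hi r
  have hiff : ∀ i : I, (t ∈ q i W ↔ t ∈ q i D') := by
    intro i
    constructor
    · exact fun h => hq i W D' hWsub h
    · intro hi
      exact hq i (w i) W (fun r => Set.subset_biUnion_of_mem (u := fun i => w i r) hi) (hw2 i hi)
  exact ⟨w, fun i hi => ⟨hw1 i hi, hw2 i hi, hw3 i hi⟩, hWsub, (hQ W D' hiff).mpr ht⟩

/-- Let `(q i)_{i ∈ I}` be a finite family of monotone
queries and `Q` a query whose membership of `t` is determined by the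
`q i`-membership vector.  Then (1) for every finite instance `D'` with
`t ∈ Q D'` there is a choice of minimal subinstances `w i ⊆ D'` with
`t ∈ q i (w i)` (for each `i` with `t ∈ q i D'`) whose pointwise union `W`
satisfies `W ⊆ D'` and `t ∈ Q W`; and (2) for a finite instance `D` with
`t ∈ Q D`, some smallest subinstance `D* ⊆ D` with `t ∈ Q D*` is a pointwise
union of minimal subinstances witnessing `t` for some of the queries `q i`. -/
theorem stmt_6 {k : ℕ} {α : Fin k → Type*} {β : Type*} {I : Type*} [Finite I]
    (q : I → ((r : Fin k) → Set (α r)) → Set β)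
    (hq : ∀ (i : I) (A B : (r : Fin k) → Set (α r)),
      (∀ r, A r ⊆ B r) → q i A ⊆ q i B)
    (t : β)
    (Q : ((r : Fin k) → Set (α r)) → Set β)
    (hQ : ∀ D₁ D₂ : (r : Fin k) → Set (α r),
      (∀ i : I, (t ∈ q i D₁ ↔ t ∈ q i D₂)) → (t ∈ Q D₁ ↔ t ∈ Q D₂)) :
    (∀ D' : (r : Fin k) → Set (α r), (∀ r, (D' r).Finite) → t ∈ Q D' →
      ∃ w : I → (r : Fin k) → Set (α r),
        (∀ i : I, t ∈ q i D' →
          (∀ r, w i r ⊆ D' r) ∧ t ∈ q i (w i) ∧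
          (∀ w' : (r : Fin k) → Set (α r), (∀ r, w' r ⊆ w i r) →
            t ∈ q i w' → w' = w i)) ∧
        (∀ r, (⋃ i ∈ {i : I | t ∈ q i D'}, w i r) ⊆ D' r) ∧
        t ∈ Q (fun r => ⋃ i ∈ {i : I | t ∈ q i D'}, w i r)) ∧
    (∀ D : (r : Fin k) → Set (α r), (∀ r, (D r).Finite) → t ∈ Q D →
      ∃ Dstar : (r : Fin k) → Set (α r),
        (∀ r, Dstar r ⊆ D r) ∧ t ∈ Q Dstar ∧
        (∀ D'' : (r : Fin k) → Set (α r), (∀ r, D'' r ⊆ D r) → t ∈ Q D'' →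
          ∑ r, (Dstar r).ncard ≤ ∑ r, (D'' r).ncard) ∧
        ∃ (S : Set I) (w : I → (r : Fin k) → Set (α r)),
          (∀ i ∈ S,
            (∀ r, w i r ⊆ Dstar r) ∧ t ∈ q i (w i) ∧
            (∀ w' : (r : Fin k) → Set (α r), (∀ r, w' r ⊆ w i r) →
              t ∈ q i w' → w' = w i)) ∧
          (∀ r, Dstar r = ⋃ i ∈ S, w i r)) := by
  classical
  refine ⟨stmt6_part1 q hq t Q hQ, ?_⟩
  intro D hfin ht
  -- the set of sizes of subinstances of D containing t
  set s : Set ℕ := {n | ∃ D'' : (r : Fin k) → Set (α r),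
    (∀ r, D'' r ⊆ D r) ∧ t ∈ Q D'' ∧ ∑ r, (D'' r).ncard = n} with hs
  have hsne : s.Nonempty := ⟨∑ r, (D r).ncard, D, fun r => subset_rfl, ht, rfl⟩
  obtain ⟨D0, hD0sub, hD0t, hD0n⟩ := Nat.sInf_mem hsne
  have hD0fin : ∀ r, (D0 r).Finite := fun r => (hfin r).subset (hD0sub r)
  have hD0min : ∀ D'' : (r : Fin k) → Set (α r), (∀ r, D'' r ⊆ D r) → t ∈ Q D'' →
      ∑ r, (D0 r).ncard ≤ ∑ r, (D'' r).ncard := by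
    intro D'' h1 h2
    rw [hD0n]
    exact Nat.sInf_le ⟨D'', h1, h2, rfl⟩
  obtain ⟨w, hw, hWsub, hWt⟩ := stmt6_part1 q hq t Q hQ D0 hD0fin hD0t
  set S : Set I := {i : I | t ∈ q i D0} with hS
  set W : (r : Fin k) → Set (α r) := fun r => ⋃ i ∈ S, w i r with hW
  have hWD : ∀ r, W r ⊆ D r := fun r => (hWsub r).trans (hD0sub r)
  refine ⟨W, hWD, hWt, ?_, S, w, ?_, fun r => rfl⟩
  · intro D'' h1 h2
    calc ∑ r, (W r).ncard ≤ ∑ r, (D0 r).ncard :=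
          Finset.sum_le_sum fun r _ => Set.ncard_le_ncard (hWsub r) (hD0fin r)
      _ ≤ ∑ r, (D'' r).ncard := hD0min D'' h1 h2
  · intro i hi
    obtain ⟨h1, h2, h3⟩ := hw i hi
    exact ⟨fun r => Set.subset_biUnion_of_mem (u := fun i => w i r) hi, h2, h3⟩
end

section
/- Let G be a finite simple graph with vertex set V, in which every vertex has degree at most 3, let E be its edge set with |E| = m ≥ 1, let f : ZMod m → E be a bijection enumerating the edges, and let p be a natural number. Then the following are equivalent: (a) there exist a finite set C ⊆ V and a finite set T ⊆ ZMod m such that T is nonempty, for every i ∈ T both (i − 1) ∈ T and some vertex of C is an endpoint of the edge f i, and |C| + |T| ≤ p + m; (b) G has a vertex cover of size at most p. -/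
/-- Let `G` be a finite simple graph of maximum degree at
most 3 with `m = |E| ≥ 1` edges enumerated by a bijection `f : ZMod m → E`,
and let `p` be a natural number.  Then there exist finite sets `C ⊆ V` and
`T ⊆ ZMod m` such that `T` is nonempty, for every `i ∈ T` both `i - 1 ∈ T`
and some vertex of `C` is an endpoint of the edge `f i`, and
`|C| + |T| ≤ p + m`, if and only if `G` has a vertex cover of size at most
`p`. -/
theorem stmt_12 {V : Type*} [Fintype V] [DecidableEq V]
    (G : SimpleGraph V) [DecidableRel G.Adj]
    (hdeg : ∀ v : V, G.degree v ≤ 3)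
    (m : ℕ) (hm1 : 1 ≤ m) (hm : G.edgeFinset.card = m)
    (f : ZMod m → G.edgeSet) (hf : Function.Bijective f) (p : ℕ) :
    (∃ (C : Finset V) (T : Finset (ZMod m)), T.Nonempty ∧
      (∀ i ∈ T, (i - 1) ∈ T ∧ ∃ v ∈ C, v ∈ (f i : Sym2 V)) ∧
      C.card + T.card ≤ p + m) ↔
    (∃ C : Finset V, C.card ≤ p ∧ ∀ e ∈ G.edgeSet, ∃ v ∈ C, v ∈ e) := by
  haveI : NeZero m := ⟨by omega⟩
  constructor
  · rintro ⟨C, T, ⟨i₀, hi₀⟩, hcl, hcard⟩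
    have hsub : ∀ n : ℕ, i₀ - (n : ZMod m) ∈ T := by
      intro n
      induction n with
      | zero => simpa using hi₀
      | succ k ih =>
        have := (hcl _ ih).1
        have heq : i₀ - (k : ZMod m) - 1 = i₀ - ((k + 1 : ℕ) : ZMod m) := by
          push_cast; ring
        rwa [heq] at this
    have hT : T = Finset.univ := by
      ext j
      simp only [Finset.mem_univ, iff_true]
      have := hsub (i₀ - j).val
      rwa [ZMod.natCast_val, ZMod.cast_id, sub_sub_cancel] at this
    have hTcard : T.card = m := by rw [hT, Finset.card_univ, ZMod.card]
    refine ⟨C, by omega, fun e he => ?_⟩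
    obtain ⟨i, hi⟩ := hf.2 ⟨e, he⟩
    have := (hcl i (hT ▸ Finset.mem_univ i)).2
    rwa [hi] at this
  · rintro ⟨C, hCp, hcov⟩
    refine ⟨C, Finset.univ, ⟨0, Finset.mem_univ 0⟩, fun i _ => ⟨Finset.mem_univ _, ?_⟩, ?_⟩
    · exact hcov _ (f i).2
    · rw [Finset.card_univ, ZMod.card]; omega
end
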